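/- The one-dimensional moving-mesh P^0-DG scheme with Lax-Friedrichs flux for the linear advection equation u_t + (a u)_x = 0 on a periodic moving mesh is L^1-stable under the CFL condition Δt · ((α_{i+1/2}+λ_{i+1/2})/2 + (α_{i-1/2}−λ_{i-1/2})/2) ≤ h_i^n for all i, provided α_{j+1/2} ≥ |λ_{j+1/2}| at every interface. -/
import Mathlib


/-- L¹ stability of the 1D moving-mesh P⁰-DG scheme with Lax–Friedrichs flux for the
linear advection equation on a periodic mesh (indices mod N). Interface i+1/2 is
indexed by i: λ i is the advection speed minus mesh velocity there, and α i ≥ |λ i|.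
Under the CFL condition Δt·((α i + λ i)/2 + (α (i-1) − λ (i-1))/2) ≤ h i for all i,
the scheme satisfies Σ_i h'_i |Ū'_i| ≤ Σ_i h_i |Ū_i|. -/
theorem stmt_7 (N : ℕ) [NeZero N]
    (h h' U V lam α : ZMod N → ℝ) (Δt : ℝ)
    (hh : ∀ i, 0 < h i) (hh' : ∀ i, 0 < h' i) (hΔt : 0 < Δt)
    (hα : ∀ i, |lam i| ≤ α i)
    (hscheme : ∀ i, h' i * V i = h i * U i
      - Δt * ((α i + lam i) / 2 * U i - (α i - lam i) / 2 * U (i + 1)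
              - (α (i - 1) + lam (i - 1)) / 2 * U (i - 1)
              + (α (i - 1) - lam (i - 1)) / 2 * U i))
    (hcfl : ∀ i, Δt * ((α i + lam i) / 2 + (α (i - 1) - lam (i - 1)) / 2) ≤ h i) :
    ∑ i : ZMod N, h' i * |V i| ≤ ∑ i : ZMod N, h i * |U i| := by
  have hc : ∀ i, 0 ≤ (α i + lam i) / 2 := fun i => by
    have := (abs_le.mp (le_refl |lam i|)).1.trans (le_refl _)
    have h1 : -lam i ≤ α i := (neg_le_abs (lam i)).trans (hα i)
    linarith
  have hd : ∀ i, 0 ≤ (α i - lam i) / 2 := fun i => by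
    have h1 : lam i ≤ α i := (le_abs_self (lam i)).trans (hα i)
    linarith
  have key : ∀ i : ZMod N, h' i * |V i| ≤
      (h i - Δt * ((α i + lam i) / 2 + (α (i - 1) - lam (i - 1)) / 2)) * |U i|
      + Δt * ((α i - lam i) / 2) * |U (i + 1)|
      + Δt * ((α (i - 1) + lam (i - 1)) / 2) * |U (i - 1)| := by
    intro i
    have e : h' i * V i =
        (h i - Δt * ((α i + lam i) / 2 + (α (i - 1) - lam (i - 1)) / 2)) * U i
        + Δt * ((α i - lam i) / 2) * U (i + 1)
        + Δt * ((α (i - 1) + lam (i - 1)) / 2) * U (i - 1) := by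
      rw [hscheme i]; ring
    have h1 : h' i * |V i| = |h' i * V i| := by
      rw [abs_mul, abs_of_pos (hh' i)]
    rw [h1, e]
    have hA : 0 ≤ h i - Δt * ((α i + lam i) / 2 + (α (i - 1) - lam (i - 1)) / 2) := by
      linarith [hcfl i]
    have hB : 0 ≤ Δt * ((α i - lam i) / 2) := mul_nonneg hΔt.le (hd i)
    have hC : 0 ≤ Δt * ((α (i - 1) + lam (i - 1)) / 2) := mul_nonneg hΔt.le (hc (i - 1))
    refine (abs_add_three _ _ _).trans_eq ?_
    simp [abs_mul, abs_of_nonneg hA, abs_of_nonneg hΔt.le, abs_of_nonneg (hd i), abs_of_nonneg (hc (i-1))]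
  calc ∑ i : ZMod N, h' i * |V i|
      ≤ ∑ i : ZMod N,
        ((h i - Δt * ((α i + lam i) / 2 + (α (i - 1) - lam (i - 1)) / 2)) * |U i|
        + Δt * ((α i - lam i) / 2) * |U (i + 1)|
        + Δt * ((α (i - 1) + lam (i - 1)) / 2) * |U (i - 1)|) :=
        Finset.sum_le_sum fun i _ => key i
    _ = ∑ i : ZMod N, h i * |U i| := by
        rw [Finset.sum_add_distrib, Finset.sum_add_distrib]
        have e1 : ∑ i : ZMod N, Δt * ((α i - lam i) / 2) * |U (i + 1)|
            = ∑ i : ZMod N, Δt * ((α (i - 1) - lam (i - 1)) / 2) * |U i| :=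
          Fintype.sum_equiv (Equiv.addRight 1) _ _ (fun i => by simp)
        have e2 : ∑ i : ZMod N, Δt * ((α (i - 1) + lam (i - 1)) / 2) * |U (i - 1)|
            = ∑ i : ZMod N, Δt * ((α i + lam i) / 2) * |U i| :=
          Fintype.sum_equiv (Equiv.subRight 1) _ _ (fun i => by simp)
        rw [e1, e2, ← Finset.sum_add_distrib, ← Finset.sum_add_distrib]
        exact Finset.sum_congr rfl fun i _ => by ring
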